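/- arXiv:1607.07678 — 10 statements merged into one kernel-verified Lean document; each statement's English description precedes it below -/
import Mathlib

section
/- Let X be a weak transition system and let T be the set of all tuples ((α,ε_0),(u_1,ε_1),…,(u_n,ε_n),(β,ε_{n+1})) with ε_i ∈ {0,1} such that (α,u_1,…,u_n,β) is a transition of X. Then the data with set of states St(X) × {0,1}, set of actions Ac(X) × {0,1} (labelled by μ composed with the first projection), and set of transitions T satisfies the multiset axiom and the patching axiom; i.e., it is a well-defined weak transition system cyl(X). -/
/-- A weak transition system over a set of labels `Λ`:
states, labelled actions, and nonempty lists of actions as transitions,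
satisfying the multiset axiom and the patching axiom. -/
structure WTS (Λ : Type) where
  State : Type
  Act : Type
  lab : Act → Λ
  Tr : State → List Act → State → Prop
  tr_ne : ∀ {α l β}, Tr α l β → l ≠ []
  multiset : ∀ {α β : State} {l l' : List Act}, Tr α l β → List.Perm l l' → Tr α l' β
  patching : ∀ {α β ν₁ ν₂ : State} {l₁ l₂ l₃ : List Act},
      l₁ ≠ [] → l₂ ≠ [] → l₃ ≠ [] →
      Tr α (l₁ ++ l₂ ++ l₃) β →
      Tr α l₁ ν₁ → Tr ν₁ (l₂ ++ l₃) β →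
      Tr α (l₁ ++ l₂) ν₂ → Tr ν₂ l₃ β →
      Tr ν₁ l₂ ν₂

/-- A morphism of weak transition systems. -/
structure WTSHom {Λ : Type} (X Y : WTS Λ) where
  onState : X.State → Y.State
  onAct : X.Act → Y.Act
  lab_eq : ∀ a, Y.lab (onAct a) = X.lab a
  map_tr : ∀ {α l β}, X.Tr α l β → Y.Tr (onState α) (l.map onAct) (onState β)

def WTSHom.comp {Λ : Type} {X Y Z : WTS Λ} (g : WTSHom Y Z) (f : WTSHom X Y) :
    WTSHom X Z where
  onState := g.onState ∘ f.onState
  onAct := g.onAct ∘ f.onAct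
  lab_eq := fun a => by simp [g.lab_eq, f.lab_eq]
  map_tr := fun h => by
    have := g.map_tr (f.map_tr h)
    simpa [List.map_map, Function.comp] using this

def WTSHom.id' {Λ : Type} (X : WTS Λ) : WTSHom X X where
  onState := id
  onAct := id
  lab_eq := fun _ => rfl
  map_tr := fun h => by simpa using h

/-- Every action is used by a 1-transition. -/
def AllUsed {Λ : Type} (X : WTS Λ) : Prop := ∀ a, ∃ α β, X.Tr α [a] β

/-- Intermediate state axiom. -/
def InterState {Λ : Type} (X : WTS Λ) : Prop :=
  ∀ {α β : X.State} (l₁ l₂ : List X.Act), l₁ ≠ [] → l₂ ≠ [] →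
    X.Tr α (l₁ ++ l₂) β → ∃ ν, X.Tr α l₁ ν ∧ X.Tr ν l₂ β

def IsCubical {Λ : Type} (X : WTS Λ) : Prop := AllUsed X ∧ InterState X

/-- CSA1. -/
def CSA1 {Λ : Type} (X : WTS Λ) : Prop :=
  ∀ {α β : X.State} (u v : X.Act),
    X.Tr α [u] β → X.Tr α [v] β → X.lab u = X.lab v → u = v

/-- CSA2 : unique intermediate state axiom. -/
def CSA2 {Λ : Type} (X : WTS Λ) : Prop :=
  ∀ {α β : X.State} (l₁ l₂ : List X.Act), l₁ ≠ [] → l₂ ≠ [] →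
    X.Tr α (l₁ ++ l₂) β → ∃! ν, X.Tr α l₁ ν ∧ X.Tr ν l₂ β

def IsRegularTS {Λ : Type} (X : WTS Λ) : Prop := IsCubical X ∧ CSA2 X

/-- Cattani-Sassone transition system. -/
def IsCSTS {Λ : Type} (X : WTS Λ) : Prop := IsCubical X ∧ CSA1 X ∧ CSA2 X

/-- Internal state. -/
def Internal {Λ : Type} (X : WTS Λ) (α : X.State) : Prop :=
  ∃ (γ δ : X.State) (l₁ l₂ : List X.Act),
    l₁ ≠ [] ∧ l₂ ≠ [] ∧ X.Tr γ (l₁ ++ l₂) δ ∧ X.Tr γ l₁ α ∧ X.Tr α l₂ δ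

/-- Reachability via a finite sequence of 1-transitions. -/
def Reachable {Λ : Type} (X : WTS Λ) (base α : X.State) : Prop :=
  ∃ (n : ℕ) (s : Fin (n + 1) → X.State) (u : Fin n → X.Act),
    s 0 = base ∧ s (Fin.last n) = α ∧
    ∀ i : Fin n, X.Tr (s i.castSucc) [u i] (s i.succ)

/-- Star-shaped pointed transition system. -/
def StarShaped {Λ : Type} (X : WTS Λ) (base : X.State) : Prop :=
  ∀ α, Reachable X base α

/-- The candidate set of transitions of the cylinder `cyl(X)`. -/
def cylTr {Λ : Type} (X : WTS Λ) :
    (X.State × Bool) → List (X.Act × Bool) → (X.State × Bool) → Prop :=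
  fun p l q => X.Tr p.1 (l.map Prod.fst) q.1

/-- the data with states `St(X) × {0,1}`, actions `Ac(X) × {0,1}`
and transitions `cylTr X` satisfies the axioms of a weak transition system. -/
theorem stmt_1 {Λ : Type} [Infinite Λ] (X : WTS Λ) :
    (∀ (p q : X.State × Bool) (l : List (X.Act × Bool)), cylTr X p l q → l ≠ []) ∧
    (∀ (p q : X.State × Bool) (l l' : List (X.Act × Bool)),
        cylTr X p l q → List.Perm l l' → cylTr X p l' q) ∧
    (∀ (p q ν₁ ν₂ : X.State × Bool) (l₁ l₂ l₃ : List (X.Act × Bool)),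
        l₁ ≠ [] → l₂ ≠ [] → l₃ ≠ [] →
        cylTr X p (l₁ ++ l₂ ++ l₃) q →
        cylTr X p l₁ ν₁ → cylTr X ν₁ (l₂ ++ l₃) q →
        cylTr X p (l₁ ++ l₂) ν₂ → cylTr X ν₂ l₃ q →
        cylTr X ν₁ l₂ ν₂) := by
  refine ⟨?_, ?_, ?_⟩
  · intro p q l h hl
    exact X.tr_ne h (by simp [hl])
  · intro p q l l' h hp
    exact X.multiset h (hp.map _)
  · intro p q ν₁ ν₂ l₁ l₂ l₃ h1 h2 h3 t t1 t23 t12 t3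
    have := X.patching (l₁ := l₁.map Prod.fst) (l₂ := l₂.map Prod.fst) (l₃ := l₃.map Prod.fst)
      (by simpa using h1) (by simpa using h2) (by simpa using h3)
      (by simpa [cylTr] using t) t1 (by simpa [cylTr] using t23) (by simpa [cylTr] using t12) t3
    exact this
end

section
/- Let X be a weak transition system and let T be the set of tuples ((α⁰,α¹),(u_1⁰,u_1¹),…,(u_n⁰,u_n¹),(β⁰,β¹)) with (u_i⁰,u_i¹) ∈ Ac(X) ×_Σ Ac(X) (pairs of actions with the same label), such that for every choice ε_0,…,ε_{n+1} ∈ {0,1}, the tuple (α^{ε_0},u_1^{ε_1},…,u_n^{ε_n},β^{ε_{n+1}}) is a transition of X. Then the data with set of states St(X) × St(X), set of actions Ac(X) ×_Σ Ac(X), and set of transitions T is a well-defined weak transition system (i.e., T satisfies the multiset axiom and the patching axiom). -/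
/-- Pairs of actions having the same label: `Ac(X) ×_Σ Ac(X)`. -/
def PairAct {Λ : Type} (X : WTS Λ) : Type :=
  {p : X.Act × X.Act // X.lab p.1 = X.lab p.2}

/-- The candidate set of transitions of the path object `cocyl(X)`:
every `{0,1}`-selection of the coordinates is a transition of `X`. -/
def cocylTr {Λ : Type} (X : WTS Λ) :
    (X.State × X.State) → List (PairAct X) → (X.State × X.State) → Prop :=
  fun p l q => ∀ (s t : X.State) (l' : List X.Act),
    (s = p.1 ∨ s = p.2) → (t = q.1 ∨ t = q.2) →
    List.Forall₂ (fun (a : PairAct X) (u : X.Act) => u = a.val.1 ∨ u = a.val.2) l l' →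
    X.Tr s l' t


private lemma forall₂_perm_left {α β : Type*} {R : α → β → Prop} :
    ∀ {l₁ l₂ : List α}, List.Perm l₁ l₂ → ∀ {m₂ : List β}, List.Forall₂ R l₂ m₂ →
      ∃ m₁, List.Perm m₁ m₂ ∧ List.Forall₂ R l₁ m₁ := by
  intro l₁ l₂ h
  induction h with
  | nil => intro m₂ h2; exact ⟨m₂, List.Perm.refl _, h2⟩
  | cons a _ ih =>
      intro m₂ h2
      cases h2 with
      | cons hb htl =>
          obtain ⟨m₁, hp, hf⟩ := ih htl
          exact ⟨_ :: m₁, hp.cons _, List.Forall₂.cons hb hf⟩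
  | swap a b _ =>
      intro m₂ h2
      cases h2 with
      | cons hb htl =>
        cases htl with
        | cons ha htl' =>
            exact ⟨_ :: _ :: _, List.Perm.swap _ _ _,
              List.Forall₂.cons ha (List.Forall₂.cons hb htl')⟩
  | trans _ _ ih1 ih2 =>
      intro m₂ h2
      obtain ⟨m₁, hp1, hf1⟩ := ih2 h2
      obtain ⟨m₀, hp0, hf0⟩ := ih1 hf1
      exact ⟨m₀, hp0.trans hp1, hf0⟩

private lemma forall₂_self_map {Λ : Type} (X : WTS Λ) (l : List (PairAct X)) :
    List.Forall₂ (fun (a : PairAct X) (u : X.Act) => u = a.val.1 ∨ u = a.val.2) l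
      (l.map (fun a => a.val.1)) := by
  induction l with
  | nil => exact List.Forall₂.nil
  | cons a t ih => exact List.Forall₂.cons (Or.inl rfl) ih

/-- the data with states `St(X) × St(X)`, actions `Ac(X) ×_Σ Ac(X)`
and transitions `cocylTr X` satisfies the axioms of a weak transition system. -/
theorem stmt_2 {Λ : Type} [Infinite Λ] (X : WTS Λ) :
    (∀ (p q : X.State × X.State) (l : List (PairAct X)), cocylTr X p l q → l ≠ []) ∧
    (∀ (p q : X.State × X.State) (l l' : List (PairAct X)),
        cocylTr X p l q → List.Perm l l' → cocylTr X p l' q) ∧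
    (∀ (p q ν₁ ν₂ : X.State × X.State) (l₁ l₂ l₃ : List (PairAct X)),
        l₁ ≠ [] → l₂ ≠ [] → l₃ ≠ [] →
        cocylTr X p (l₁ ++ l₂ ++ l₃) q →
        cocylTr X p l₁ ν₁ → cocylTr X ν₁ (l₂ ++ l₃) q →
        cocylTr X p (l₁ ++ l₂) ν₂ → cocylTr X ν₂ l₃ q →
        cocylTr X ν₁ l₂ ν₂) := by
  refine ⟨?_, ?_, ?_⟩
  · intro p q l h hl
    subst hl
    exact X.tr_ne (h p.1 q.1 [] (Or.inl rfl) (Or.inl rfl) List.Forall₂.nil) rfl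
  · intro p q l l' h hperm s t m hs ht hf
    obtain ⟨m₀, hp, hf0⟩ := forall₂_perm_left hperm hf
    exact X.multiset (h s t m₀ hs ht hf0) hp
  · intro p q ν₁ ν₂ l₁ l₂ l₃ h1 h2 h3 hbig ha hb hc hd
    intro s t m hs ht hf
    set L1 := l₁.map (fun a : PairAct X => a.val.1) with hL1
    set L3 := l₃.map (fun a : PairAct X => a.val.1) with hL3
    have f1 := forall₂_self_map X l₁
    have f3 := forall₂_self_map X l₃
    have hL1ne : L1 ≠ [] := by simpa [hL1] using h1
    have hmne : m ≠ [] := by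
      rintro rfl; rcases List.forall₂_nil_right_iff.mp hf with rfl; exact h2 rfl
    have hL3ne : L3 ≠ [] := by simpa [hL3] using h3
    refine X.patching (α := p.1) (β := q.1) hL1ne hmne hL3ne ?_ ?_ ?_ ?_ ?_
    · exact hbig p.1 q.1 (L1 ++ m ++ L3) (Or.inl rfl) (Or.inl rfl)
        (List.rel_append (List.rel_append f1 hf) f3)
    · exact ha p.1 s L1 (Or.inl rfl) hs f1
    · exact hb s q.1 (m ++ L3) hs (Or.inl rfl) (List.rel_append hf f3)
    · exact hc p.1 t (L1 ++ m) (Or.inl rfl) ht (List.rel_append f1 hf)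
    · exact hd t q.1 L3 ht (Or.inl rfl) f3
end

section
/- Let X be a cubical transition system. A state α of X is internal (i.e., there exist transitions (γ,u_1,…,u_n,δ), (γ,u_1,…,u_p,α), (α,u_{p+1},…,u_n,δ) with n ≥ 2 and 1 ≤ p < n) if and only if there exist three transitions (γ,u_1,u_2,δ), (γ,u_1,α), and (α,u_2,δ). -/
/-- in a cubical transition system, a state is internal iff it is the
intermediate state of some 2-dimensional transition. -/
theorem stmt_3 {Λ : Type} [Infinite Λ] (X : WTS Λ) (h : IsCubical X) (α : X.State) :
    Internal X α ↔
      ∃ (γ δ : X.State) (u₁ u₂ : X.Act),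
        X.Tr γ [u₁, u₂] δ ∧ X.Tr γ [u₁] α ∧ X.Tr α [u₂] δ := by
  constructor
  · rintro ⟨γ, δ, l₁, l₂, h₁, h₂, hT0, hT1, hT2⟩
    obtain ⟨a, u₁, rfl⟩ : ∃ a u₁, l₁ = a ++ [u₁] := by
      rcases List.eq_nil_or_concat l₁ with h | ⟨a, u₁, rfl⟩
      · exact absurd h h₁
      · exact ⟨a, u₁, by simp⟩
    obtain ⟨u₂, b, rfl⟩ : ∃ u₂ b, l₂ = u₂ :: b := by
      cases l₂ with
      | nil => exact absurd rfl h₂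
      | cons u₂ b => exact ⟨u₂, b, rfl⟩
    have hT0' : X.Tr γ (a ++ [u₁] ++ [u₂] ++ b) δ := by
      have : a ++ [u₁] ++ u₂ :: b = a ++ [u₁] ++ [u₂] ++ b := by simp
      rwa [this] at hT0
    have hT2' : X.Tr α ([u₂] ++ b) δ := hT2
    rcases eq_or_ne a [] with rfl | ha
    · rcases eq_or_ne b [] with rfl | hb
      · -- both empty
        refine ⟨γ, δ, u₁, u₂, ?_, by simpa using hT1, by simpa using hT2⟩
        simpa using hT0'
      · -- a = [], b ≠ []
        simp only [List.nil_append] at hT0' hT1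
        obtain ⟨ρ, hρ1, hρ2⟩ := h.2 ([u₁] ++ [u₂]) b (by simp) hb
          (by simpa [List.append_assoc] using hT0')
        have hαρ : X.Tr α [u₂] ρ :=
          X.patching (by simp) (by simp) hb hT0' hT1 hT2' hρ1 hρ2
        exact ⟨γ, ρ, u₁, u₂, by simpa using hρ1, hT1, hαρ⟩
    · rcases eq_or_ne b [] with rfl | hb
      · -- a ≠ [], b = []
        simp only [List.append_nil] at hT0' hT2'
        obtain ⟨μ, hμ1, hμ2⟩ := h.2 a ([u₁] ++ [u₂]) ha (by simp)
          (by simpa [List.append_assoc] using hT0')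
        have hμα : X.Tr μ [u₁] α :=
          X.patching ha (by simp) (by simp) hT0' hμ1 hμ2 hT1 hT2'
        exact ⟨μ, δ, u₁, u₂, by simpa using hμ2, hμα, by simpa using hT2⟩
      · -- a ≠ [], b ≠ []
        obtain ⟨μ, hμ1, hμ2⟩ := h.2 a ([u₁] ++ [u₂] ++ b) ha (by simp)
          (by simpa [List.append_assoc] using hT0')
        obtain ⟨ρ, hρ1, hρ2⟩ := h.2 (a ++ [u₁] ++ [u₂]) b (by simp) hb hT0'
        have hμα : X.Tr μ [u₁] α := by
          refine X.patching (l₁ := a) (l₂ := [u₁]) (l₃ := [u₂] ++ b) ha (by simp) (by simp)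
            ?_ hμ1 (by simpa [List.append_assoc] using hμ2) hT1 hT2'
          simpa [List.append_assoc] using hT0'
        have hαρ : X.Tr α [u₂] ρ := by
          refine X.patching (l₁ := a ++ [u₁]) (l₂ := [u₂]) (l₃ := b) (by simp) (by simp) hb
            ?_ hT1 hT2' hρ1 hρ2
          simpa [List.append_assoc] using hT0'
        have hμρ : X.Tr μ ([u₁] ++ [u₂]) ρ := by
          refine X.patching (l₁ := a) (l₂ := [u₁] ++ [u₂]) (l₃ := b) ha (by simp) hb
            ?_ hμ1 (by simpa [List.append_assoc] using hμ2)
            (by simpa [List.append_assoc] using hρ1) hρ2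
          simpa [List.append_assoc] using hT0'
        exact ⟨μ, ρ, u₁, u₂, by simpa using hμρ, hμα, hαρ⟩
  · rintro ⟨γ, δ, u₁, u₂, hT0, hT1, hT2⟩
    exact ⟨γ, δ, [u₁], [u₂], by simp, by simp, by simpa using hT0, hT1, hT2⟩
end

section
/- Let X be a Cattani-Sassone transition system (cubical, satisfying CSA1 and the unique intermediate state axiom CSA2). Then cyl(X)///Int(X), defined with states Int(X) × {0} ⊔ Ext(X) × {0,1}, actions Ac(X), and transitions all tuples ((α,ε_0),u_1,…,u_n,(β,ε_{n+1})) such that (α,u_1,…,u_n,β) is a transition of X, satisfies CSA2: for every transition ((α,ε_0),u_1,…,u_n,(β,ε_{n+1})) with n ≥ 2 and every 1 ≤ p < n, there is a unique state ν with both ((α,ε_0),u_1,…,u_p,ν) and (ν,u_{p+1},…,u_n,(β,ε_{n+1})) transitions. -/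
/-- for a Cattani-Sassone transition system `X`, the transition system
`cyl(X)///Int(X)` (states `Int(X) × {0} ⊔ Ext(X) × {0,1}` realized as a subtype of
`St(X) × Bool`, actions `Ac(X)`, transitions the tuples whose underlying tuple is a
transition of `X`) satisfies the unique intermediate state axiom CSA2. -/
theorem stmt_5 {Λ : Type} [Infinite Λ] (X : WTS Λ) (h : IsCSTS X) :
    ∀ (p q : {s : X.State × Bool // Internal X s.1 → s.2 = false})
      (l₁ l₂ : List X.Act), l₁ ≠ [] → l₂ ≠ [] →
      X.Tr p.val.1 (l₁ ++ l₂) q.val.1 →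
      ∃! ν : {s : X.State × Bool // Internal X s.1 → s.2 = false},
        X.Tr p.val.1 l₁ ν.val.1 ∧ X.Tr ν.val.1 l₂ q.val.1 := by
  intro p q l₁ l₂ h₁ h₂ htr
  obtain ⟨ν₀, ⟨hν₁, hν₂⟩, huniq⟩ := h.2.2 l₁ l₂ h₁ h₂ htr
  refine ⟨⟨(ν₀, false), fun _ => rfl⟩, ⟨hν₁, hν₂⟩, ?_⟩
  rintro ⟨⟨μ, b⟩, hμ⟩ ⟨hμ₁, hμ₂⟩
  have heq : μ = ν₀ := huniq μ ⟨hμ₁, hμ₂⟩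
  subst heq
  have hb : b = false := hμ ⟨p.val.1, q.val.1, l₁, l₂, h₁, h₂, htr, hμ₁, hμ₂⟩
  subst hb
  rfl
end

section
/- Let X be a regular transition system. Define a family (T_n) by: T_1 is the set of triples ((α⁻,α⁺),u,(β⁻,β⁺)) such that (α⁻,u,β⁻) and (α⁺,u,β⁺) are transitions of X; for n ≥ 2, T_n is the set of tuples ((α⁻,α⁺),u_1,…,u_n,(β⁻,β⁺)) such that (α^±,u_1,…,u_n,β^±) are transitions of X and for every permutation σ of {1,…,n} and every 1 ≤ p < n there exists a pair (γ⁻,γ⁺) with ((α⁻,α⁺),u_{σ(1)},…,u_{σ(p)},(γ⁻,γ⁺)) ∈ T_p and ((γ⁻,γ⁺),u_{σ(p+1)},…,u_{σ(n)},(β⁻,β⁺)) ∈ T_{n-p}. Then: (a) for every transition (α,u_1,…,u_n,β) of X, the tuple ((α,α),u_1,…,u_n,(β,β)) belongs to T = ⋃ T_n; (b) the structure with states St(X) × St(X), actions Ac(X), and transitions T is a regular transition system. -/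
/-- The family `T = ⋃ T_n` of the path construction `pscocyl(X)`, defined by
recursion on the length: `T_1` consists of the pairs of 1-transitions with one
common action, and a tuple of length `n ≥ 2` is in `T_n` iff both coordinate
tuples are transitions of `X` and every permuted splitting admits a pair of
intermediate states with both halves in the family. -/
def PsTr {Λ : Type} (X : WTS Λ) (p : X.State × X.State) (l : List X.Act)
    (q : X.State × X.State) : Prop :=
  (∃ u : X.Act, l = [u] ∧ X.Tr p.1 [u] q.1 ∧ X.Tr p.2 [u] q.2) ∨
  (2 ≤ l.length ∧ X.Tr p.1 l q.1 ∧ X.Tr p.2 l q.2 ∧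
    ∀ l₁ l₂ : List X.Act, l₁ ≠ [] → l₂ ≠ [] → List.Perm l (l₁ ++ l₂) →
      ∃ γ : X.State × X.State, PsTr X p l₁ γ ∧ PsTr X γ l₂ q)
termination_by l.length
decreasing_by
  all_goals
    have hl := List.Perm.length_eq ‹List.Perm l (l₁ ++ l₂)›
    simp only [List.length_append] at hl
    have h1 := List.length_pos_iff.mpr ‹l₁ ≠ []›
    have h2 := List.length_pos_iff.mpr ‹l₂ ≠ []›
    omega

/-- Under regularity, `PsTr` is simply the componentwise transition relation. -/
theorem psTr_iff {Λ : Type} (X : WTS Λ) (h : IsRegularTS X) :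
    ∀ (l : List X.Act) (p q : X.State × X.State),
      PsTr X p l q ↔ (X.Tr p.1 l q.1 ∧ X.Tr p.2 l q.2) := by
  have key : ∀ (n : ℕ) (l : List X.Act), l.length ≤ n → ∀ p q : X.State × X.State,
      PsTr X p l q ↔ (X.Tr p.1 l q.1 ∧ X.Tr p.2 l q.2) := by
    intro n
    induction n with
    | zero =>
      intro l hl p q
      have : l = [] := List.length_eq_zero_iff.mp (Nat.le_zero.mp hl)
      subst this
      constructor
      · rw [PsTr]
        rintro (⟨u, hu, _⟩ | ⟨h2, _⟩)
        · simp at hu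
        · simp at h2
      · rintro ⟨h1, _⟩; exact absurd rfl (X.tr_ne h1)
    | succ n ih =>
      intro l hl p q
      constructor
      · intro hps
        rw [PsTr] at hps
        rcases hps with ⟨u, hu, h1, h2⟩ | ⟨_, h1, h2, _⟩
        · subst hu; exact ⟨h1, h2⟩
        · exact ⟨h1, h2⟩
      · rintro ⟨h1, h2⟩
        rw [PsTr]
        rcases Nat.lt_or_ge l.length 2 with hlen | hlen
        · have hne : l ≠ [] := X.tr_ne h1
          have : l.length = 1 := by
            have := List.length_pos_iff.mpr hne; omega
          obtain ⟨u, hu⟩ := List.length_eq_one_iff.mp this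
          subst hu
          exact Or.inl ⟨u, rfl, h1, h2⟩
        · refine Or.inr ⟨hlen, h1, h2, ?_⟩
          intro l₁ l₂ hne1 hne2 hperm
          have ht1 : X.Tr p.1 (l₁ ++ l₂) q.1 := X.multiset h1 hperm
          have ht2 : X.Tr p.2 (l₁ ++ l₂) q.2 := X.multiset h2 hperm
          obtain ⟨ν₁, hν₁a, hν₁b⟩ := h.1.2 l₁ l₂ hne1 hne2 ht1
          obtain ⟨ν₂, hν₂a, hν₂b⟩ := h.1.2 l₁ l₂ hne1 hne2 ht2
          have hlsum := hperm.length_eq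
          simp only [List.length_append] at hlsum
          have hp1 := List.length_pos_iff.mpr hne1
          have hp2 := List.length_pos_iff.mpr hne2
          refine ⟨(ν₁, ν₂), ?_, ?_⟩
          · rw [ih l₁ (by omega) p (ν₁, ν₂)]; exact ⟨hν₁a, hν₂a⟩
          · rw [ih l₂ (by omega) (ν₁, ν₂) q]; exact ⟨hν₁b, hν₂b⟩
  exact fun l => key l.length l le_rfl

/-- (a) the diagonal of every transition of `X` belongs to the family
`T`; (b) states `St(X) × St(X)`, actions `Ac(X)` and transitions `PsTr X` form a
regular transition system (weak transition system axioms, cubical axioms, CSA2). -/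
theorem stmt_6 {Λ : Type} [Infinite Λ] (X : WTS Λ) (h : IsRegularTS X) :
    (∀ (α β : X.State) (l : List X.Act), X.Tr α l β → PsTr X (α, α) l (β, β)) ∧
    (∀ (p q : X.State × X.State) (l : List X.Act), PsTr X p l q → l ≠ []) ∧
    (∀ (p q : X.State × X.State) (l l' : List X.Act),
        PsTr X p l q → List.Perm l l' → PsTr X p l' q) ∧
    (∀ (p q ν₁ ν₂ : X.State × X.State) (l₁ l₂ l₃ : List X.Act),
        l₁ ≠ [] → l₂ ≠ [] → l₃ ≠ [] →
        PsTr X p (l₁ ++ l₂ ++ l₃) q →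
        PsTr X p l₁ ν₁ → PsTr X ν₁ (l₂ ++ l₃) q →
        PsTr X p (l₁ ++ l₂) ν₂ → PsTr X ν₂ l₃ q →
        PsTr X ν₁ l₂ ν₂) ∧
    (∀ u : X.Act, ∃ p q, PsTr X p [u] q) ∧
    (∀ (p q : X.State × X.State) (l₁ l₂ : List X.Act), l₁ ≠ [] → l₂ ≠ [] →
        PsTr X p (l₁ ++ l₂) q →
        ∃! ν : X.State × X.State, PsTr X p l₁ ν ∧ PsTr X ν l₂ q) := by
  have key := psTr_iff X h
  refine ⟨?_, ?_, ?_, ?_, ?_, ?_⟩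
  · intro α β l ht
    rw [key]; exact ⟨ht, ht⟩
  · intro p q l hps
    rw [key] at hps
    exact X.tr_ne hps.1
  · intro p q l l' hps hperm
    rw [key] at hps ⊢
    exact ⟨X.multiset hps.1 hperm, X.multiset hps.2 hperm⟩
  · intro p q ν₁ ν₂ l₁ l₂ l₃ h1 h2 h3 t0 t1 t2 t3 t4
    rw [key] at t0 t1 t2 t3 t4 ⊢
    exact ⟨X.patching h1 h2 h3 t0.1 t1.1 t2.1 t3.1 t4.1,
           X.patching h1 h2 h3 t0.2 t1.2 t2.2 t3.2 t4.2⟩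
  · intro u
    obtain ⟨α, β, ht⟩ := h.1.1 u
    exact ⟨(α, α), (β, β), (key _ _ _).mpr ⟨ht, ht⟩⟩
  · intro p q l₁ l₂ h1 h2 hps
    rw [key] at hps
    obtain ⟨ν₁, hν₁, huniq₁⟩ := h.2 l₁ l₂ h1 h2 hps.1
    obtain ⟨ν₂, hν₂, huniq₂⟩ := h.2 l₁ l₂ h1 h2 hps.2
    refine ⟨(ν₁, ν₂), ⟨(key _ _ _).mpr ⟨hν₁.1, hν₂.1⟩,
      (key _ _ _).mpr ⟨hν₁.2, hν₂.2⟩⟩, ?_⟩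
    rintro ⟨γ₁, γ₂⟩ ⟨ha, hb⟩
    rw [key] at ha hb
    exact Prod.ext (huniq₁ γ₁ ⟨ha.1, hb.1⟩) (huniq₂ γ₂ ⟨ha.2, hb.2⟩)
end

section
/- In the category of regular transition systems, consider a pushout square with left vertical map p : A → B and right vertical map f : X → Y. If p is surjective on states, surjective on actions, and surjective on transitions, then f is surjective on states, surjective on actions, and surjective on transitions. -/
/-- Cattani-Sassone transition system. -/
private lemma WTSHom.ext' {Λ : Type} {X Y : WTS Λ} {f g : WTSHom X Y}
    (h1 : f.onState = g.onState) (h2 : f.onAct = g.onAct) : f = g := by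
  cases f; cases g; cases h1; cases h2; rfl

private lemma perm_map_lift {A B : Type} (g : A → B) :
    ∀ {l0 m : List B}, l0.Perm m → ∀ l : List A, l.map g = l0 →
      ∃ l' : List A, l.Perm l' ∧ l'.map g = m := by
  intro l0 m h
  induction h with
  | nil => exact fun l hl => ⟨l, List.Perm.refl l, hl⟩
  | cons x p ih =>
    intro l hl
    cases l with
    | nil => simp at hl
    | cons a t =>
      simp only [List.map_cons, List.cons.injEq] at hl
      obtain ⟨hx, ht⟩ := hl
      obtain ⟨t', pt, ht'⟩ := ih t ht
      exact ⟨a :: t', pt.cons a, by simp [hx, ht']⟩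
  | swap x y l₁ =>
    intro l hl
    cases l with
    | nil => simp at hl
    | cons a t =>
      cases t with
      | nil => simp at hl
      | cons b t =>
        simp only [List.map_cons, List.cons.injEq] at hl
        obtain ⟨ha, hb, ht⟩ := hl
        exact ⟨b :: a :: t, List.Perm.swap b a t, by simp [ha, hb, ht]⟩
  | trans p1 p2 ih1 ih2 =>
    intro l hl
    obtain ⟨l', pl', hl'⟩ := ih1 l hl
    obtain ⟨l'', pl'', hl''⟩ := ih2 l' hl'
    exact ⟨l'', pl'.trans pl'', hl''⟩

private lemma perm_map {A B : Type} (g : A → B) {l : List A} {m : List B}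
    (h : (l.map g).Perm m) : ∃ l', l.Perm l' ∧ l'.map g = m :=
  perm_map_lift g h l rfl

/-- in the category of regular transition systems, a pushout of a map
which is onto on states, on actions and on transitions is onto on states, on actions
and on transitions. The pushout square is encoded by its universal property with
respect to regular transition systems. -/
theorem stmt_7 {Λ : Type} [Infinite Λ] (A B X Y : WTS Λ)
    (hA : IsRegularTS A) (hB : IsRegularTS B) (hX : IsRegularTS X) (hY : IsRegularTS Y)
    (φ : WTSHom A X) (p : WTSHom A B) (f : WTSHom X Y) (ψ : WTSHom B Y)
    (hcomm : f.comp φ = ψ.comp p)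
    (huniv : ∀ (Z : WTS Λ), IsRegularTS Z →
      ∀ (u : WTSHom X Z) (v : WTSHom B Z), u.comp φ = v.comp p →
        ∃! h : WTSHom Y Z, h.comp f = u ∧ h.comp ψ = v)
    (hps : Function.Surjective p.onState)
    (hpa : Function.Surjective p.onAct)
    (hpt : ∀ (α : B.State) (l : List B.Act) (β : B.State), B.Tr α l β →
      ∃ (α' : A.State) (l' : List A.Act) (β' : A.State),
        A.Tr α' l' β' ∧ p.onState α' = α ∧ l'.map p.onAct = l ∧ p.onState β' = β) :
    Function.Surjective f.onState ∧ Function.Surjective f.onAct ∧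
    (∀ (α : Y.State) (l : List Y.Act) (β : Y.State), Y.Tr α l β →
      ∃ (α' : X.State) (l' : List X.Act) (β' : X.State),
        X.Tr α' l' β' ∧ f.onState α' = α ∧ l'.map f.onAct = l ∧ f.onState β' = β) := by
  classical
  have hcommS : f.onState ∘ φ.onState = ψ.onState ∘ p.onState :=
    congrArg WTSHom.onState hcomm
  have hcommA : f.onAct ∘ φ.onAct = ψ.onAct ∘ p.onAct :=
    congrArg WTSHom.onAct hcomm
  -- Step 1: surjectivity on actions
  have asurj : Function.Surjective f.onAct := by
    set Za : WTS Λ :=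
      { State := Unit
        Act := Λ × Prop
        lab := Prod.fst
        Tr := fun _ l _ => l ≠ []
        tr_ne := fun h => h
        multiset := fun h hp he => h (List.Perm.eq_nil (he ▸ hp))
        patching := fun _ h2 _ _ _ _ _ _ => h2 } with hZa
    have regZa : IsRegularTS Za := by
      refine ⟨⟨fun a => ⟨(), (), List.cons_ne_nil _ _⟩, ?_⟩, ?_⟩
      · intro α β l₁ l₂ h1 h2 _; exact ⟨(), h1, h2⟩
      · intro α β l₁ l₂ h1 h2 _; exact ⟨(), ⟨h1, h2⟩, fun y _ => rfl⟩
    have mapne : ∀ {W : WTS Λ} (g : W.Act → Λ × Prop) {α l β}, W.Tr α l β →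
        l.map g ≠ [] := by
      intro W g α l β h he
      exact W.tr_ne h (List.map_eq_nil_iff.mp he)
    set ua : WTSHom X Za :=
      ⟨fun _ => (), fun a => (X.lab a, False), fun a => rfl,
        fun h => mapne _ h⟩ with hua
    set va : WTSHom B Za :=
      ⟨fun _ => (), fun a => (B.lab a, False), fun a => rfl,
        fun h => mapne _ h⟩ with hva
    have hca : ua.comp φ = va.comp p := by
      refine WTSHom.ext' rfl (funext fun a => ?_)
      show (X.lab (φ.onAct a), False) = (B.lab (p.onAct a), False)
      rw [φ.lab_eq, p.lab_eq]
    obtain ⟨h, _, huq⟩ := huniv Za regZa ua va hca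
    set h1 : WTSHom Y Za :=
      ⟨fun _ => (), fun y => (Y.lab y, False), fun y => rfl,
        fun h => mapne _ h⟩ with hh1
    set h2 : WTSHom Y Za :=
      ⟨fun _ => (), fun y => (Y.lab y, ¬ ∃ x, f.onAct x = y), fun y => rfl,
        fun h => mapne _ h⟩ with hh2
    have e1 : h1 = h := by
      refine huq h1 ⟨?_, ?_⟩
      · refine WTSHom.ext' rfl (funext fun x => ?_)
        show (Y.lab (f.onAct x), False) = (X.lab x, False)
        rw [f.lab_eq]
      · refine WTSHom.ext' rfl (funext fun b => ?_)
        show (Y.lab (ψ.onAct b), False) = (B.lab b, False)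
        rw [ψ.lab_eq]
    have e2 : h2 = h := by
      refine huq h2 ⟨?_, ?_⟩
      · refine WTSHom.ext' rfl (funext fun x => ?_)
        show (Y.lab (f.onAct x), ¬ ∃ x', f.onAct x' = f.onAct x) = (X.lab x, False)
        rw [f.lab_eq]
        exact congrArg _ (eq_false fun hn => hn ⟨x, rfl⟩)
      · refine WTSHom.ext' rfl (funext fun b => ?_)
        show (Y.lab (ψ.onAct b), ¬ ∃ x', f.onAct x' = ψ.onAct b) = (B.lab b, False)
        rw [ψ.lab_eq]
        obtain ⟨a, rfl⟩ := hpa b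
        exact congrArg _ (eq_false fun hn => hn ⟨φ.onAct a, congrFun hcommA a⟩)
    intro y
    have := congrFun (congrArg WTSHom.onAct (e1.trans e2.symm)) y
    have hsnd : False = (¬ ∃ x, f.onAct x = y) := congrArg Prod.snd this
    exact Classical.byContradiction fun hn => hsnd ▸ hn
  -- Step 2: surjectivity on transitions
  set TrS : Y.State → List Y.Act → Y.State → Prop :=
    fun α l β => ∃ (a : X.State) (m : List X.Act) (b : X.State),
      X.Tr a m b ∧ f.onState a = α ∧ m.map f.onAct = l ∧ f.onState b = β with hTrS
  have trS_sub : ∀ {α l β}, TrS α l β → Y.Tr α l β := by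
    rintro α l β ⟨a, m, b, hx, rfl, rfl, rfl⟩
    exact f.map_tr hx
  have appne : ∀ {A : Type} {l m : List A}, l ≠ [] → l ++ m ≠ [] := by
    intro A l m h he
    exact h (List.append_eq_nil_iff.mp he).1
  set Zt : WTS Λ :=
    { State := Y.State
      Act := Y.Act
      lab := Y.lab
      Tr := TrS
      tr_ne := by
        rintro α l β ⟨a, m, b, hx, _, rfl, _⟩ he
        exact X.tr_ne hx (List.map_eq_nil_iff.mp he)
      multiset := by
        rintro α β l l' ⟨a, m, b, hx, ha, rfl, hb⟩ hp
        obtain ⟨m', pm, hm'⟩ := perm_map f.onAct hp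
        exact ⟨a, m', b, X.multiset hx pm, ha, hm', hb⟩
      patching := by
        rintro α β ν₁ ν₂ l₁ l₂ l₃ h1 h2 h3 H Ha Hb Hc Hd
        have Hy0 : Y.Tr α (l₁ ++ l₂ ++ l₃) β := trS_sub H
        obtain ⟨a, m, b, hx, hfa, hfm, hfb⟩ := H
        rw [List.map_eq_append_iff] at hfm
        obtain ⟨m12, m₃, rfl, h12, hm3⟩ := hfm
        rw [List.map_eq_append_iff] at h12
        obtain ⟨m₁, m₂, rfl, hm1, hm2⟩ := h12
        have hm1ne : m₁ ≠ [] := fun he => h1 (by subst he; simpa using hm1.symm)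
        have hm2ne : m₂ ≠ [] := fun he => h2 (by subst he; simpa using hm2.symm)
        have hm3ne : m₃ ≠ [] := fun he => h3 (by subst he; simpa using hm3.symm)
        obtain ⟨n₁, hxa, hxbc⟩ :=
          hX.1.2 m₁ (m₂ ++ m₃) hm1ne (appne hm2ne)
            (List.append_assoc m₁ m₂ m₃ ▸ hx)
        obtain ⟨n₂, hxab, hxc⟩ := hX.1.2 (m₁ ++ m₂) m₃ (appne hm1ne) hm3ne hx
        have hn12 : X.Tr n₁ m₂ n₂ :=
          X.patching hm1ne hm2ne hm3ne hx hxa hxbc hxab hxc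
        have hIm1 : Y.Tr α l₁ (f.onState n₁) := by
          have := f.map_tr hxa; rwa [hfa, hm1] at this
        have hIm23 : Y.Tr (f.onState n₁) (l₂ ++ l₃) β := by
          have := f.map_tr hxbc; rwa [List.map_append, hm2, hm3, hfb] at this
        have hIm12 : Y.Tr α (l₁ ++ l₂) (f.onState n₂) := by
          have := f.map_tr hxab; rwa [List.map_append, hm1, hm2, hfa] at this
        have hIm3 : Y.Tr (f.onState n₂) l₃ β := by
          have := f.map_tr hxc; rwa [hm3, hfb] at this
        have u1 : f.onState n₁ = ν₁ :=
          (hY.2 l₁ (l₂ ++ l₃) h1 (appne h2)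
            (List.append_assoc l₁ l₂ l₃ ▸ Hy0)).unique
            ⟨hIm1, hIm23⟩ ⟨trS_sub Ha, trS_sub Hb⟩
        have u2 : f.onState n₂ = ν₂ :=
          (hY.2 (l₁ ++ l₂) l₃ (appne h1) h3 Hy0).unique
            ⟨hIm12, hIm3⟩ ⟨trS_sub Hc, trS_sub Hd⟩
        exact ⟨n₁, m₂, n₂, hn12, u1, hm2, u2⟩ } with hZt
  have interZt : InterState Zt := by
    rintro α β l₁ l₂ h1 h2 ⟨a, m, b, hx, hfa, hfm, hfb⟩
    rw [List.map_eq_append_iff] at hfm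
    obtain ⟨m₁, m₂, rfl, hm1, hm2⟩ := hfm
    have hm1ne : m₁ ≠ [] := fun he => h1 (by subst he; simpa using hm1.symm)
    have hm2ne : m₂ ≠ [] := fun he => h2 (by subst he; simpa using hm2.symm)
    obtain ⟨n, hxa, hxb⟩ := hX.1.2 m₁ m₂ hm1ne hm2ne hx
    exact ⟨f.onState n, ⟨a, m₁, n, hxa, hfa, hm1, rfl⟩,
      ⟨n, m₂, b, hxb, rfl, hm2, hfb⟩⟩
  have regZt : IsRegularTS Zt := by
    refine ⟨⟨?_, interZt⟩, ?_⟩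
    · intro a
      obtain ⟨a', rfl⟩ := asurj a
      obtain ⟨α, β, ht⟩ := hX.1.1 a'
      exact ⟨f.onState α, f.onState β, ⟨α, [a'], β, ht, rfl, rfl, rfl⟩⟩
    · intro α β l₁ l₂ h1 h2 H
      obtain ⟨ν, hp1, hp2⟩ := interZt l₁ l₂ h1 h2 H
      exact ⟨ν, ⟨hp1, hp2⟩, fun y hy =>
        (hY.2 l₁ l₂ h1 h2 (trS_sub H)).unique
          ⟨trS_sub hy.1, trS_sub hy.2⟩ ⟨trS_sub hp1, trS_sub hp2⟩⟩
  set ut : WTSHom X Zt :=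
    ⟨f.onState, f.onAct, f.lab_eq, fun h => ⟨_, _, _, h, rfl, rfl, rfl⟩⟩ with hut
  have vtm : ∀ {α l β}, B.Tr α l β →
      Zt.Tr (ψ.onState α) (l.map ψ.onAct) (ψ.onState β) := by
    intro α l β hb
    obtain ⟨a', l', b', ha, hpa', hpl, hpb⟩ := hpt α l β hb
    refine ⟨φ.onState a', l'.map φ.onAct, φ.onState b', φ.map_tr ha, ?_, ?_, ?_⟩
    · rw [← hpa']; exact congrFun hcommS a'
    · rw [List.map_map, hcommA, ← List.map_map, hpl]
    · rw [← hpb]; exact congrFun hcommS b'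
  set vt : WTSHom B Zt := ⟨ψ.onState, ψ.onAct, ψ.lab_eq, vtm⟩ with hvt
  have hct : ut.comp φ = vt.comp p := WTSHom.ext' hcommS hcommA
  obtain ⟨h, ⟨hhf, hhψ⟩, _⟩ := huniv Zt regZt ut vt hct
  set j : WTSHom Zt Y :=
    ⟨id, id, fun a => rfl, fun h => by simpa using trS_sub h⟩ with hj
  obtain ⟨h0, _, hu0⟩ := huniv Y hY f ψ hcomm
  have e1 : (j.comp h).comp f = f := by
    have : (j.comp h).comp f = j.comp (h.comp f) := rfl
    rw [this, hhf]; exact WTSHom.ext' rfl rfl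
  have e2 : (j.comp h).comp ψ = ψ := by
    have : (j.comp h).comp ψ = j.comp (h.comp ψ) := rfl
    rw [this, hhψ]; exact WTSHom.ext' rfl rfl
  have hjh : j.comp h = WTSHom.id' Y :=
    (hu0 (j.comp h) ⟨e1, e2⟩).trans
      (hu0 (WTSHom.id' Y) ⟨WTSHom.ext' rfl rfl, WTSHom.ext' rfl rfl⟩).symm
  have hS : ∀ y, h.onState y = y := fun y =>
    congrFun (congrArg WTSHom.onState hjh) y
  have hA : ∀ y, h.onAct y = y := fun y =>
    congrFun (congrArg WTSHom.onAct hjh) y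
  have tsurj : ∀ (α : Y.State) (l : List Y.Act) (β : Y.State), Y.Tr α l β →
      ∃ (α' : X.State) (l' : List X.Act) (β' : X.State),
        X.Tr α' l' β' ∧ f.onState α' = α ∧ l'.map f.onAct = l ∧
          f.onState β' = β := by
    intro α l β hy
    have hl : l.map h.onAct = l := by
      rw [show h.onAct = id from funext hA]; exact List.map_id l
    have hts : TrS α l β := by
      have := h.map_tr hy
      rwa [hS α, hS β, hl] at this
    exact hts
  -- Step 3: surjectivity on states
  have ssurj : Function.Surjective f.onState := by
    set Zb : WTS Λ :=
      { State := Prop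
        Act := Λ
        lab := id
        Tr := fun α l β => l ≠ [] ∧ α = β
        tr_ne := And.left
        multiset := fun h hp => ⟨fun he => h.1 (List.Perm.eq_nil (he ▸ hp)), h.2⟩
        patching := fun _ h2 _ _ ha _ hb _ => ⟨h2, ha.2.symm.trans hb.2⟩ } with hZb
    have regZb : IsRegularTS Zb := by
      refine ⟨⟨fun a => ⟨True, True, by simp [hZb], rfl⟩, ?_⟩, ?_⟩
      · rintro α β l₁ l₂ h1 h2 ⟨_, e⟩
        exact ⟨α, ⟨h1, rfl⟩, ⟨h2, e⟩⟩
      · rintro α β l₁ l₂ h1 h2 ⟨_, e⟩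
        exact ⟨α, ⟨⟨h1, rfl⟩, ⟨h2, e⟩⟩, fun y hy => hy.1.2.symm⟩
    have mapne : ∀ {W : WTS Λ} {α l β}, W.Tr α l β → l.map W.lab ≠ [] := by
      intro W α l β h he
      exact W.tr_ne h (List.map_eq_nil_iff.mp he)
    set ub : WTSHom X Zb :=
      ⟨fun _ => False, X.lab, fun a => rfl, fun h => ⟨mapne h, rfl⟩⟩ with hub
    set vb : WTSHom B Zb :=
      ⟨fun _ => False, B.lab, fun a => rfl, fun h => ⟨mapne h, rfl⟩⟩ with hvb
    have hcb : ub.comp φ = vb.comp p := by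
      refine WTSHom.ext' rfl (funext fun a => ?_)
      show X.lab (φ.onAct a) = B.lab (p.onAct a)
      rw [φ.lab_eq, p.lab_eq]
    obtain ⟨h, _, huq⟩ := huniv Zb regZb ub vb hcb
    have inrange : ∀ {α l β}, Y.Tr α l β →
        (∃ x, f.onState x = α) ∧ (∃ x, f.onState x = β) := by
      intro α l β hy
      obtain ⟨a, m, b, hx, ha, hm, hb⟩ := tsurj α l β hy
      exact ⟨⟨a, ha⟩, ⟨b, hb⟩⟩
    set h1 : WTSHom Y Zb :=
      ⟨fun _ => False, Y.lab, fun y => rfl, fun h => ⟨mapne h, rfl⟩⟩ with hh1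
    set h2 : WTSHom Y Zb :=
      ⟨fun y => ¬ ∃ x, f.onState x = y, Y.lab, fun y => rfl, by
        intro α l β hy
        obtain ⟨hα, hβ⟩ := inrange hy
        exact ⟨mapne hy,
          (eq_false fun hn => hn hα).trans (eq_false fun hn => hn hβ).symm⟩⟩ with hh2
    have e1 : h1 = h := by
      refine huq h1 ⟨?_, ?_⟩
      · exact WTSHom.ext' rfl (funext fun x => f.lab_eq x)
      · exact WTSHom.ext' rfl (funext fun b => ψ.lab_eq b)
    have e2 : h2 = h := by
      refine huq h2 ⟨?_, ?_⟩
      · refine WTSHom.ext' (funext fun x => ?_) (funext fun x => f.lab_eq x)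
        exact eq_false fun hn => hn ⟨x, rfl⟩
      · refine WTSHom.ext' (funext fun b => ?_) (funext fun b => ψ.lab_eq b)
        obtain ⟨a, rfl⟩ := hps b
        exact eq_false fun hn => hn ⟨φ.onState a, congrFun hcommS a⟩
    intro y
    have hsnd : False = (¬ ∃ x, f.onState x = y) :=
      congrFun (congrArg WTSHom.onState (e1.trans e2.symm)) y
    exact Classical.byContradiction fun hn => hsnd ▸ hn
  exact ⟨ssurj, asurj, tsurj⟩
end

section
/- Let X be a Cattani-Sassone transition system. The map CSA₂·cyl(X) → CSA₁·CSA₂·cyl(X) (which is the identity on states and sends the action (u,ε) to u) is a split epimorphism: the map in the other direction given by the identity on states and u ↦ (u,0) on actions is a well-defined morphism and a section of it. -/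
/-- The states of the cylinder after CSA2 is forced: internal states are collapsed
into the `0` copy; external states have two copies. -/
def CylState {Λ : Type} (X : WTS Λ) : Type :=
  {s : X.State × Bool // Internal X s.1 → s.2 = false}

/-- `CSA₂ ⋅ cyl(X)` : states `Int(X) × {0} ⊔ Ext(X) × {0,1}`, actions `Ac(X) × {0,1}`
labelled via the first coordinate, transitions the tuples whose underlying tuple is
a transition of `X`. -/
def Csa2Cyl {Λ : Type} (X : WTS Λ) : WTS Λ where
  State := CylState X
  Act := X.Act × Bool
  lab := fun a => X.lab a.1
  Tr := fun p l q => X.Tr p.val.1 (l.map Prod.fst) q.val.1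
  tr_ne := fun h hx => X.tr_ne h (by simp [hx])
  multiset := fun h hp => X.multiset h (hp.map Prod.fst)
  patching := by
    intro α β ν₁ ν₂ l₁ l₂ l₃ h1 h2 h3 ht ha hb hc hd
    simp only [List.map_append] at ht hb hc
    exact X.patching (by simpa using h1) (by simpa using h2) (by simpa using h3)
      ht ha hb hc hd

/-- `CSA₁ ⋅ CSA₂ ⋅ cyl(X)` : same states, actions `Ac(X)`, transitions the tuples
whose underlying tuple is a transition of `X`. -/
def Csa1Csa2Cyl {Λ : Type} (X : WTS Λ) : WTS Λ where
  State := CylState X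
  Act := X.Act
  lab := X.lab
  Tr := fun p l q => X.Tr p.val.1 l q.val.1
  tr_ne := fun h => X.tr_ne h
  multiset := fun h hp => X.multiset h hp
  patching := fun h1 h2 h3 ht ha hb hc hd => X.patching h1 h2 h3 ht ha hb hc hd

/-- The unit map `CSA₂ ⋅ cyl(X) → CSA₁ ⋅ CSA₂ ⋅ cyl(X)` : identity on states,
first projection on actions. -/
def cylProj {Λ : Type} (X : WTS Λ) : WTSHom (Csa2Cyl X) (Csa1Csa2Cyl X) where
  onState := id
  onAct := Prod.fst
  lab_eq := fun _ => rfl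
  map_tr := fun h => h

/-- for a Cattani-Sassone transition system `X`, the unit map
`CSA₂ ⋅ cyl(X) → CSA₁ ⋅ CSA₂ ⋅ cyl(X)` is a split epimorphism; a section is
given by the identity on states and `u ↦ (u, 0)` on actions. -/
theorem stmt_9 {Λ : Type} [Infinite Λ] (X : WTS Λ) (h : IsCSTS X) :
    ∃ s : WTSHom (Csa1Csa2Cyl X) (Csa2Cyl X),
      s.onState = id ∧ s.onAct = (fun u => (u, false)) ∧
      (cylProj X).comp s = WTSHom.id' (Csa1Csa2Cyl X) := by
  refine ⟨{ onState := id, onAct := fun u => (u, false),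
            lab_eq := fun _ => rfl,
            map_tr := fun {α l β} h => ?_ }, rfl, rfl, rfl⟩
  show X.Tr _ ((l.map (fun u => (u, false))).map Prod.fst) _
  have : (l.map (fun u => (u, false))).map (Prod.fst : X.Act × Bool → X.Act) = l := by
    exact (List.map_map ..).trans (List.map_id l)
  rw [this]; exact h
end

section
/- Past-similarity on a star-shaped Cattani-Sassone transition system is reflexive and symmetric, but there exists a star-shaped Cattani-Sassone transition system on which it is not transitive. An explicit counterexample: the system with base state *, three other states α, β, γ, two actions u, v with μ(u) ≠ μ(v), and 1-transitions (*,u,α), (*,u,β), (*,v,β), (*,v,γ). In it α ≃_past β and β ≃_past γ but not α ≃_past γ. -/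
/-- Past-similarity of two states `α`, `β` of a pointed transition system: there is
a word `w` and two base-point preserving morphisms `f,g : (P(w),0) → (X,*)` ending
at `α` and `β`, agreeing on actions, whose pairing is a morphism into the path
system `cocyl(X)` (whose transitions are pairs of transitions with common actions). -/
def PastSim {Λ : Type} (X : WTS Λ) (base α β : X.State) : Prop :=
  ∃ (n : ℕ) (s t : Fin (n + 1) → X.State) (u : Fin n → X.Act),
    s 0 = base ∧ t 0 = base ∧ s (Fin.last n) = α ∧ t (Fin.last n) = β ∧
    ∀ i : Fin n,
      X.Tr (s i.castSucc) [u i] (s i.succ) ∧ X.Tr (t i.castSucc) [u i] (t i.succ)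

/-- The explicit counterexample to transitivity: states `*,α,β,γ` (as `0,1,2,3`),
two actions `u = false`, `v = true` with distinct labels `x ≠ y`, and 1-transitions
`(*,u,α)`, `(*,u,β)`, `(*,v,β)`, `(*,v,γ)`. -/
def NT {Λ : Type} (x y : Λ) : WTS Λ where
  State := Fin 4
  Act := Bool
  lab := fun b => if b then y else x
  Tr := fun s l t =>
    s = 0 ∧ ((l = [false] ∧ (t = 1 ∨ t = 2)) ∨ (l = [true] ∧ (t = 2 ∨ t = 3)))
  tr_ne := by
    rintro α l β ⟨-, (⟨rfl, -⟩ | ⟨rfl, -⟩)⟩ <;> simp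
  multiset := by
    rintro α β l l' ⟨h0, (⟨rfl, ht⟩ | ⟨rfl, ht⟩)⟩ hp
    · exact ⟨h0, Or.inl ⟨List.perm_singleton.mp hp.symm, ht⟩⟩
    · exact ⟨h0, Or.inr ⟨List.perm_singleton.mp hp.symm, ht⟩⟩
  patching := by
    rintro α β ν₁ ν₂ l₁ l₂ l₃ h1 h2 h3 ⟨-, (⟨h, -⟩ | ⟨h, -⟩)⟩ - - - - <;>
    · exfalso
      have e1 := List.length_pos_of_ne_nil h1
      have e2 := List.length_pos_of_ne_nil h2
      have e3 := List.length_pos_of_ne_nil h3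
      have := congrArg List.length h
      simp [List.length_append] at this
      omega

/-- past-similarity on a star-shaped Cattani-Sassone transition system
is reflexive and symmetric, but on the explicit counterexample `NT x y` (which is a
star-shaped Cattani-Sassone transition system) it is not transitive:
`α ≃_past β` and `β ≃_past γ` but not `α ≃_past γ`. -/
theorem stmt_14 {Λ : Type} [Infinite Λ] (x y : Λ) (hxy : x ≠ y) :
    (∀ (X : WTS Λ) (base : X.State), IsCSTS X → StarShaped X base →
      (∀ α, PastSim X base α α) ∧
      (∀ α β, PastSim X base α β → PastSim X base β α)) ∧
    (IsCSTS (NT x y) ∧ StarShaped (NT x y) ((0 : Fin 4) : (NT x y).State) ∧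
      PastSim (NT x y) ((0 : Fin 4) : (NT x y).State) (1 : Fin 4) (2 : Fin 4) ∧
      PastSim (NT x y) ((0 : Fin 4) : (NT x y).State) (2 : Fin 4) (3 : Fin 4) ∧
      ¬ PastSim (NT x y) ((0 : Fin 4) : (NT x y).State) (1 : Fin 4) (3 : Fin 4)) := by
  constructor
  · intro X base _ hstar
    constructor
    · intro α
      obtain ⟨n, s, u, h0, hl, htr⟩ := hstar α
      exact ⟨n, s, s, u, h0, h0, hl, hl, fun i => ⟨htr i, htr i⟩⟩
    · rintro α β ⟨n, s, t, u, hs0, ht0, hsl, htl, htr⟩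
      exact ⟨n, t, s, u, ht0, hs0, htl, hsl, fun i => ⟨(htr i).2, (htr i).1⟩⟩
  refine ⟨⟨⟨?_, ?_⟩, ?_, ?_⟩, ?_, ?_, ?_, ?_⟩
  · intro a
    cases a
    · exact ⟨(0 : Fin 4), (1 : Fin 4), rfl, Or.inl ⟨rfl, Or.inl rfl⟩⟩
    · exact ⟨(0 : Fin 4), (2 : Fin 4), rfl, Or.inr ⟨rfl, Or.inl rfl⟩⟩
  · rintro α β l₁ l₂ h1 h2 ⟨-, (⟨h, -⟩ | ⟨h, -⟩)⟩ <;>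
    · exfalso
      have e1 := List.length_pos_iff.mpr h1
      have e2 := List.length_pos_iff.mpr h2
      have := congrArg List.length h
      simp [List.length_append] at this
      change _ + _ = 1 at this
      omega
  · rintro α β u v ⟨-, (⟨hu, -⟩ | ⟨hu, -⟩)⟩ ⟨-, (⟨hv, -⟩ | ⟨hv, -⟩)⟩ hl <;>
      injection hu with hu <;> injection hv with hv <;> subst hu hv <;>
      simp_all [NT] <;> exact absurd hl.symm hxy
  · rintro α β l₁ l₂ h1 h2 ⟨-, (⟨h, -⟩ | ⟨h, -⟩)⟩ <;>
    · exfalso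
      have e1 := List.length_pos_iff.mpr h1
      have e2 := List.length_pos_iff.mpr h2
      have := congrArg List.length h
      simp [List.length_append] at this
      change _ + _ = 1 at this
      omega
  · show ∀ α : Fin 4, Reachable (NT x y) ((0 : Fin 4) : (NT x y).State) α
    have tr : ∀ (b : Bool) (β : Fin 4), (NT x y).Tr (0 : Fin 4) [b] β →
        Reachable (NT x y) ((0 : Fin 4) : (NT x y).State) β := fun b β h =>
      ⟨1, (![0, β] : Fin 2 → Fin 4), ![b], rfl, rfl, fun i => by fin_cases i; exact h⟩
    intro α
    fin_cases α
    · exact ⟨0, (fun _ => (0 : Fin 4)), Fin.elim0, rfl, rfl, fun i => i.elim0⟩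
    · exact tr false 1 ⟨rfl, Or.inl ⟨rfl, Or.inl rfl⟩⟩
    · exact tr false 2 ⟨rfl, Or.inl ⟨rfl, Or.inr rfl⟩⟩
    · exact tr true 3 ⟨rfl, Or.inr ⟨rfl, Or.inr rfl⟩⟩
  · refine ⟨1, (![0, 1] : Fin 2 → Fin 4), (![0, 2] : Fin 2 → Fin 4), ![false],
      rfl, rfl, rfl, rfl, fun i => ?_⟩
    fin_cases i
    exact ⟨⟨rfl, Or.inl ⟨rfl, Or.inl rfl⟩⟩, ⟨rfl, Or.inl ⟨rfl, Or.inr rfl⟩⟩⟩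
  · refine ⟨1, (![0, 2] : Fin 2 → Fin 4), (![0, 3] : Fin 2 → Fin 4), ![true],
      rfl, rfl, rfl, rfl, fun i => ?_⟩
    fin_cases i
    exact ⟨⟨rfl, Or.inr ⟨rfl, Or.inl rfl⟩⟩, ⟨rfl, Or.inr ⟨rfl, Or.inr rfl⟩⟩⟩
  · rintro ⟨n, s, t, u, hs0, ht0, hsl, htl, htr⟩
    cases n with
    | zero =>
      have h10 : ((1 : Fin 4)) ≠ ((0 : Fin 4)) := by decide
      exact h10 (hsl.symm.trans (show s (Fin.last 0) = (0 : Fin 4) from hs0))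
    | succ m =>
      have hsucc : (Fin.last m : Fin (m+1)).succ = Fin.last (m + 1) := rfl
      obtain ⟨hs, ht⟩ := htr (Fin.last m)
      rw [hsucc, hsl] at hs
      rw [hsucc, htl] at ht
      obtain ⟨-, (⟨hu, hv⟩ | ⟨hu, hv⟩)⟩ := hs
      · obtain ⟨-, (⟨hu', hv'⟩ | ⟨hu', hv'⟩)⟩ := ht
        · rcases hv' with h | h <;>
            exact absurd h (show ((3:Fin 4)) ≠ _ by decide)
        · rw [hu] at hu'; simp at hu'
      · rcases hv with h | h <;>
          exact absurd h (show ((1:Fin 4)) ≠ _ by decide)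
end

section
/- Let (X,*) be a star-shaped Cattani-Sassone transition system whose set of transitions is closed under past-similarity: whenever (α,u_1,…,u_n,β) is a transition and γ ≃_past α, δ ≃_past β, then (γ,u_1,…,u_n,δ) is a transition. Then the past-similarity relation ≃_past on the states of (X,*) is transitive (hence an equivalence relation). -/
/-- Past-similarity, concrete description: a `double path' from `(*,*)` to `(α,β)`,
i.e. a sequence of pairs of states starting at `(*,*)` and ending at `(α,β)` together
with actions `u₁,…,uₙ` such that all four coordinate-mixed steps are 1-transitions. -/
def PastSim4 {Λ : Type} (X : WTS Λ) (base α β : X.State) : Prop :=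
  ∃ (n : ℕ) (s t : Fin (n + 1) → X.State) (u : Fin n → X.Act),
    s 0 = base ∧ t 0 = base ∧ s (Fin.last n) = α ∧ t (Fin.last n) = β ∧
    ∀ i : Fin n,
      X.Tr (s i.castSucc) [u i] (s i.succ) ∧ X.Tr (s i.castSucc) [u i] (t i.succ) ∧
      X.Tr (t i.castSucc) [u i] (s i.succ) ∧ X.Tr (t i.castSucc) [u i] (t i.succ)

lemma pastsim_refl {Λ : Type} (X : WTS Λ) (base α : X.State)
    (h : Reachable X base α) : PastSim4 X base α α := by
  obtain ⟨n, s, u, h0, hl, hstep⟩ := h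
  exact ⟨n, s, s, u, h0, h0, hl, hl, fun i =>
    ⟨hstep i, hstep i, hstep i, hstep i⟩⟩

lemma pastsim_symm {Λ : Type} (X : WTS Λ) (base α β : X.State)
    (h : PastSim4 X base α β) : PastSim4 X base β α := by
  obtain ⟨n, s, t, u, hs0, ht0, hsl, htl, hstep⟩ := h
  exact ⟨n, t, s, u, ht0, hs0, htl, hsl, fun i =>
    ⟨(hstep i).2.2.2, (hstep i).2.2.1, (hstep i).2.1, (hstep i).1⟩⟩

lemma pastsim_prefix {Λ : Type} (X : WTS Λ) (base : X.State) {m : ℕ}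
    (s t : Fin (m + 1) → X.State) (u : Fin m → X.Act)
    (hs0 : s 0 = base) (ht0 : t 0 = base)
    (hstep : ∀ i : Fin m,
      X.Tr (s i.castSucc) [u i] (s i.succ) ∧ X.Tr (s i.castSucc) [u i] (t i.succ) ∧
      X.Tr (t i.castSucc) [u i] (s i.succ) ∧ X.Tr (t i.castSucc) [u i] (t i.succ))
    (k : ℕ) (hk : k ≤ m) :
    PastSim4 X base (s ⟨k, by omega⟩) (t ⟨k, by omega⟩) := by
  refine ⟨k, fun i => s ⟨i, by omega⟩, fun i => t ⟨i, by omega⟩,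
    fun i => u ⟨i, by omega⟩, ?_, ?_, ?_, ?_, ?_⟩
  · simpa using hs0
  · simpa using ht0
  · rfl
  · rfl
  · intro i
    exact hstep ⟨i, by omega⟩

/-- if the set of transitions of a star-shaped Cattani-Sassone
transition system `(X,*)` is closed under past-similarity, then past-similarity
is a transitive relation on the states of `(X,*)`. -/
theorem stmt_15 {Λ : Type} [Infinite Λ] (X : WTS Λ) (base : X.State)
    (h : IsCSTS X) (hstar : StarShaped X base)
    (hclosed : ∀ {α β : X.State} {l : List X.Act} (γ δ : X.State),
      X.Tr α l β → PastSim4 X base γ α → PastSim4 X base δ β → X.Tr γ l δ) :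
    ∀ α β γ : X.State,
      PastSim4 X base α β → PastSim4 X base β γ → PastSim4 X base α γ := by
  intro α β γ h1 h2
  obtain ⟨m, s', t', u', hs0, ht0, hsl, htl, hstep⟩ := h2
  match m, s', t', u', hs0, ht0, hsl, htl, hstep with
  | 0, s', t', u', hs0, ht0, hsl, htl, hstep =>
    have hβ : β = base := by rw [← hsl]; exact hs0
    have hγ : γ = base := by rw [← htl]; exact ht0
    have hγβ : γ = β := hγ.trans hβ.symm
    rw [hγβ]; exact h1
  | (k+1), s', t', u', hs0, ht0, hsl, htl, hstep =>
    classical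
    refine ⟨k + 1, fun i => if i = Fin.last (k+1) then α else s' i, t', u',
      ?_, ht0, ?_, htl, ?_⟩
    · have h0 : (0 : Fin (k+2)) ≠ Fin.last (k+1) := by
        simp [Fin.ext_iff]
      simp only [if_neg h0]; exact hs0
    · simp
    · intro i
      have hc : (i.castSucc : Fin (k+2)) ≠ Fin.last (k+1) := by
        simp [Fin.ext_iff]; omega
      simp only [if_neg hc]
      by_cases hi : (i.succ : Fin (k+2)) = Fin.last (k+1)
      · simp only [if_pos hi]
        have hβ' : s' i.succ = β := by rw [hi]; exact hsl
        have step := hstep i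
        have refl1 : PastSim4 X base (s' i.castSucc) (s' i.castSucc) :=
          pastsim_refl X base _ (hstar _)
        have refl2 : PastSim4 X base (t' i.castSucc) (t' i.castSucc) :=
          pastsim_refl X base _ (hstar _)
        have hαβ : PastSim4 X base α (s' i.succ) := hβ' ▸ h1
        exact ⟨hclosed _ _ step.1 refl1 hαβ, step.2.1,
          hclosed _ _ step.2.2.1 refl2 hαβ, step.2.2.2⟩
      · simp only [if_neg hi]; exact hstep i
end

section
/- Let (X,*) be a star-shaped cubical transition system and let r(X) be the quotient whose states are St(X)/≃_past (quotient by the equivalence closure of past-similarity), whose actions are Ac(X)/≃_{CSA1} (quotient by the equivalence closure of the relation u ≃_{CSA1} v iff μ(u)=μ(v) and there exist states α,β with (α,u,β) and (α,v,β) transitions), equipped with the final transition structure generated by the images of the transitions of X. Then r(X), pointed at the image of *, is again a star-shaped cubical transition system: the multiset, patching, all-actions-used and intermediate-state axioms hold, and every state of r(X) is reachable from the base state. -/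
/-- The relation `u ≃_CSA1 v` : equally labelled actions joined by two 1-transitions
with the same source and target. -/
def csa1Rel {Λ : Type} (X : WTS Λ) (u v : X.Act) : Prop :=
  X.lab u = X.lab v ∧ ∃ α β, X.Tr α [u] β ∧ X.Tr α [v] β

/-- The final (generated) transition structure on the quotient: the smallest set of
tuples containing the images of the transitions of `X` and closed under the patching
axiom. -/
inductive GenTr {Λ : Type} (X : WTS Λ) (base : X.State) :
    Quot (PastSim4 X base) → List (Quot (csa1Rel X)) → Quot (PastSim4 X base) → Prop
  | of {α β : X.State} {l : List X.Act} : X.Tr α l β →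
      GenTr X base (Quot.mk _ α) (l.map (Quot.mk _)) (Quot.mk _ β)
  | patch {p q ν₁ ν₂ : Quot (PastSim4 X base)} {l₁ l₂ l₃ : List (Quot (csa1Rel X))} :
      l₁ ≠ [] → l₂ ≠ [] → l₃ ≠ [] →
      GenTr X base p (l₁ ++ l₂ ++ l₃) q →
      GenTr X base p l₁ ν₁ → GenTr X base ν₁ (l₂ ++ l₃) q →
      GenTr X base p (l₁ ++ l₂) ν₂ → GenTr X base ν₂ l₃ q →
      GenTr X base ν₁ l₂ ν₂

private lemma perm_map_pull {A B : Type} (f : A → B) :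
    ∀ {L m : List B}, L.Perm m → ∀ l : List A, l.map f = L →
      ∃ l', l.Perm l' ∧ l'.map f = m := by
  intro L m h
  induction h with
  | nil => intro l hl; exact ⟨l, List.Perm.refl l, by simpa using hl⟩
  | cons x h ih =>
      intro l hl
      cases l with
      | nil => simp at hl
      | cons a l0 =>
          simp only [List.map_cons, List.cons.injEq] at hl
          obtain ⟨l', hp, hm⟩ := ih l0 hl.2
          exact ⟨a :: l', hp.cons a, by simp [hm, hl.1]⟩
  | swap x y L =>
      intro l hl
      match l, hl with
      | a :: b :: l0, hl =>
          simp only [List.map_cons, List.cons.injEq] at hl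
          exact ⟨b :: a :: l0, List.Perm.swap b a l0,
            by simp [hl.1, hl.2.1, hl.2.2]⟩
  | trans h1 h2 ih1 ih2 =>
      intro l hl
      obtain ⟨l1, hp1, hm1⟩ := ih1 l hl
      obtain ⟨l2, hp2, hm2⟩ := ih2 l1 hm1
      exact ⟨l2, hp1.trans hp2, hm2⟩

private lemma genTr_perm {Λ : Type} (X : WTS Λ) (base : X.State)
    {p q : Quot (PastSim4 X base)} {l : List (Quot (csa1Rel X))}
    (h : GenTr X base p l q) :
    ∀ l', l.Perm l' → GenTr X base p l' q := by
  induction h with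
  | @of α β l h =>
      intro l' hp
      obtain ⟨l'', hperm, hmap⟩ := perm_map_pull (Quot.mk (csa1Rel X)) hp l rfl
      rw [← hmap]
      exact GenTr.of (X.multiset h hperm)
  | @patch p q ν₁ ν₂ l₁ l₂ l₃ h1 h2 h3 hbig hl1 hl23 hl12 hl3 ihbig ih1 ih23 ih12 ih3 =>
      intro l' hp
      refine GenTr.patch h1 (fun he => h2 ((he ▸ hp).eq_nil)) h3 ?_ hl1 ?_ ?_ hl3
      · have := ihbig (l₁ ++ (l' ++ l₃))
          (by rw [List.append_assoc]; exact (hp.append_right l₃).append_left l₁)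
        rwa [← List.append_assoc] at this
      · exact ih23 _ (hp.append_right l₃)
      · exact ih12 _ (hp.append_left l₁)

private lemma genTr_inter {Λ : Type} (X : WTS Λ) (base : X.State)
    (hX : IsCubical X)
    {p q : Quot (PastSim4 X base)} {l : List (Quot (csa1Rel X))}
    (h : GenTr X base p l q) :
    ∀ l₁ l₂, l₁ ≠ [] → l₂ ≠ [] → l = l₁ ++ l₂ →
      ∃ ν, GenTr X base p l₁ ν ∧ GenTr X base ν l₂ q := by
  induction h with
  | @of α β l h =>
      intro l₁ l₂ h1 h2 hl
      rw [List.map_eq_append_iff] at hl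
      obtain ⟨m₁, m₂, hm, hm1, hm2⟩ := hl
      have hm1' : m₁ ≠ [] := by rintro rfl; exact h1 hm1.symm
      have hm2' : m₂ ≠ [] := by rintro rfl; exact h2 hm2.symm
      obtain ⟨ν, hν1, hν2⟩ := hX.2 m₁ m₂ hm1' hm2' (hm ▸ h)
      exact ⟨Quot.mk _ ν, hm1 ▸ GenTr.of hν1, hm2 ▸ GenTr.of hν2⟩
  | @patch p q ν₁ ν₂ l₁ l₂ l₃ h1 h2 h3 hbig hl1 hl23 hl12 hl3 ihbig ih1 ih23 ih12 ih3 =>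
      intro a b ha hb hab
      subst hab
      have ha' : l₁ ++ a ≠ [] := by simp [ha]
      have hb' : b ++ l₃ ≠ [] := by simp [hb]
      obtain ⟨ν, hν1, hν2⟩ := ihbig (l₁ ++ a) (b ++ l₃) ha' hb'
        (by simp [List.append_assoc])
      refine ⟨ν, ?_, ?_⟩
      · refine GenTr.patch h1 ha hb' ?_ hl1 ?_ hν1 hν2
        · have := hbig
          rwa [show l₁ ++ (a ++ b) ++ l₃ = l₁ ++ a ++ (b ++ l₃) by
            simp [List.append_assoc]] at this
        · have := hl23
          rwa [show (a ++ b) ++ l₃ = a ++ (b ++ l₃) by simp [List.append_assoc]] at this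
      · refine GenTr.patch ha' hb h3 ?_ hν1 hν2 ?_ hl3
        · have := hbig
          rwa [show l₁ ++ (a ++ b) ++ l₃ = (l₁ ++ a) ++ b ++ l₃ by
            simp [List.append_assoc]] at this
        · have := hl12
          rwa [show l₁ ++ (a ++ b) = (l₁ ++ a) ++ b by simp [List.append_assoc]] at this

/-- for a star-shaped cubical transition system `(X,*)`, the reduction
`r(X)` (states `St(X)/≃_past`, actions `Ac(X)/≃_CSA1`, transitions the final
structure `GenTr` generated by the images of the transitions of `X`) is again a
star-shaped cubical transition system: the transitions are nonempty tuples, the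
multiset and patching axioms hold, every action is used, the intermediate state
axiom holds, and every state is reachable from the base state. -/
theorem stmt_17 {Λ : Type} [Infinite Λ] (X : WTS Λ) (base : X.State)
    (hX : IsCubical X) (hstar : StarShaped X base) :
    (∀ (p q : Quot (PastSim4 X base)) (l : List (Quot (csa1Rel X))),
        GenTr X base p l q → l ≠ []) ∧
    (∀ (p q : Quot (PastSim4 X base)) (l l' : List (Quot (csa1Rel X))),
        GenTr X base p l q → List.Perm l l' → GenTr X base p l' q) ∧
    (∀ (p q ν₁ ν₂ : Quot (PastSim4 X base)) (l₁ l₂ l₃ : List (Quot (csa1Rel X))),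
        l₁ ≠ [] → l₂ ≠ [] → l₃ ≠ [] →
        GenTr X base p (l₁ ++ l₂ ++ l₃) q →
        GenTr X base p l₁ ν₁ → GenTr X base ν₁ (l₂ ++ l₃) q →
        GenTr X base p (l₁ ++ l₂) ν₂ → GenTr X base ν₂ l₃ q →
        GenTr X base ν₁ l₂ ν₂) ∧
    (∀ a : Quot (csa1Rel X), ∃ p q, GenTr X base p [a] q) ∧
    (∀ (p q : Quot (PastSim4 X base)) (l₁ l₂ : List (Quot (csa1Rel X))),
        l₁ ≠ [] → l₂ ≠ [] → GenTr X base p (l₁ ++ l₂) q →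
        ∃ ν, GenTr X base p l₁ ν ∧ GenTr X base ν l₂ q) ∧
    (∀ p : Quot (PastSim4 X base),
      ∃ (n : ℕ) (s : Fin (n + 1) → Quot (PastSim4 X base))
        (u : Fin n → Quot (csa1Rel X)),
        s 0 = Quot.mk (PastSim4 X base) base ∧ s (Fin.last n) = p ∧
        ∀ i : Fin n, GenTr X base (s i.castSucc) [u i] (s i.succ)) := by
  refine ⟨?_, ?_, ?_, ?_, ?_, ?_⟩
  · intro p q l h
    induction h with
    | @of α β l h =>
        simpa using fun hl => X.tr_ne h hl
    | patch h1 h2 h3 _ _ _ _ _ => exact h2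
  · intro p q l l' h hp
    exact genTr_perm X base h l' hp
  · intro p q ν₁ ν₂ l₁ l₂ l₃ h1 h2 h3 hbig hl1 hl23 hl12 hl3
    exact GenTr.patch h1 h2 h3 hbig hl1 hl23 hl12 hl3
  · intro a
    induction a using Quot.ind with
    | _ u =>
        obtain ⟨α, β, h⟩ := hX.1 u
        exact ⟨Quot.mk _ α, Quot.mk _ β, GenTr.of h⟩
  · intro p q l₁ l₂ h1 h2 h
    exact genTr_inter X base hX h l₁ l₂ h1 h2 rfl
  · intro p
    induction p using Quot.ind with
    | _ α =>
        obtain ⟨n, s, u, hs0, hsl, htr⟩ := hstar α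
        refine ⟨n, fun i => Quot.mk _ (s i), fun i => Quot.mk _ (u i),
          by simp [hs0], by simp [hsl], fun i => ?_⟩
        simpa using GenTr.of (htr i)
end
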